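/- arXiv:1905.06868 — 9 statements merged into one kernel-verified Lean document; each statement's English description precedes it below -/
import Mathlib

section
/- Let M be an indecomposable well-order and let n be a natural number. Suppose L_0, …, L_{n−1} are linear orders such that for each i < n there is an order embedding of L_i into M but no order embedding of M into L_i. Then the linear order (Σ_{i<n} L_i) + M (the lexicographic sum of the L_i followed by M) is order isomorphic to M (equivalently, each of the two orders embeds into the other). -/
/-- A well-order `M` is *indecomposable* if for every `m : M`, `M` order-embeds into the
final segment `{x : M // m ≤ x}`. -/
def Indecomposable (M : Type*) [LinearOrder M] : Prop :=
  ∀ m : M, Nonempty (M ↪o {x : M // m ≤ x})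

/-!
A well-order `L` that embeds into `M` but not conversely is isomorphic to an initial interval
`Iio t` of `M`, while indecomposability makes `M` and `Ici t` embed into each other, hence
isomorphic. So `L + M ≃ Iio t + Ici t ≃ M`, and the finite sum is absorbed by induction on `n`,
splitting off the first summand.
-/

open Set

theorem nonempty_orderIso_of_orderEmbeddings {α β : Type*} [LinearOrder α] [LinearOrder β]
    [WellFoundedLT β] (f : α ↪o β) (g : β ↪o α) : Nonempty (α ≃o β) :=
  have := f.wellFoundedLT
  ⟨.ofRelIsoLT <| InitialSeg.antisymm f.ltEmbedding.collapse g.ltEmbedding.collapse⟩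

theorem exists_orderIso_Iio_of_not_orderEmbedding {α β : Type*} [LinearOrder α] [LinearOrder β]
    [WellFoundedLT β] (f : α ↪o β) (hf : ¬ Nonempty (β ↪o α)) :
    ∃ b : β, Nonempty (α ≃o Iio b) := by
  have := f.wellFoundedLT
  obtain p | e := f.ltEmbedding.collapse.principalSumRelIso
  · exact ⟨p.top, ⟨(OrderIso.ofRelIsoLT p.subrelIso).symm⟩⟩
  · exact (hf ⟨(OrderIso.ofRelIsoLT e).symm.toOrderEmbedding⟩).elim

noncomputable def OrderIso.sumLexSigmaLexFinSucc {n : ℕ} (L : Fin (n + 1) → Type*)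
    [∀ i, LinearOrder (L i)] : L 0 ⊕ₗ (Σₗ i : Fin n, L i.succ) ≃o Σₗ i, L i := by
  refine StrictMono.orderIsoOfSurjective (fun x => toLex <| Sum.elim (fun a => ⟨0, a⟩)
    (fun p => ⟨(ofLex p).1.succ, (ofLex p).2⟩) (ofLex x)) ?_ ?_
  · rintro (a | ⟨i, a⟩) (b | ⟨j, b⟩) h
    · exact Sigma.Lex.right _ _ (Sum.Lex.inl_lt_inl_iff.1 h)
    · exact Sigma.Lex.left _ _ j.succ_pos
    · exact (Sum.Lex.not_inr_lt_inl h).elim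
    · rcases Sum.Lex.inr_lt_inr_iff.1 h with ⟨_, _, hij⟩ | ⟨_, _, hab⟩
      · exact Sigma.Lex.left _ _ (Fin.succ_lt_succ_iff.2 hij)
      · exact Sigma.Lex.right _ _ hab
  · rintro ⟨i, a⟩
    cases i using Fin.cases with
    | zero => exact ⟨toLex (.inl a), rfl⟩
    | succ j => exact ⟨toLex (.inr (toLex ⟨j, a⟩)), rfl⟩

namespace Indecomposable

variable {M : Type*} [LinearOrder M] [WellFoundedLT M]

theorem nonempty_orderIso_Ici (hM : Indecomposable M) (m : M) : Nonempty (M ≃o Ici m) :=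
  let ⟨f⟩ := hM m
  nonempty_orderIso_of_orderEmbeddings f (OrderEmbedding.subtype _)

theorem nonempty_sumLex_orderIso {L : Type*} [LinearOrder L] (hM : Indecomposable M)
    (f : L ↪o M) (hf : ¬ Nonempty (M ↪o L)) : Nonempty (L ⊕ₗ M ≃o M) := by
  obtain ⟨t, ⟨e⟩⟩ := exists_orderIso_Iio_of_not_orderEmbedding f hf
  obtain ⟨e'⟩ := hM.nonempty_orderIso_Ici t
  exact ⟨(e.sumLexCongr e').trans (OrderIso.sumLexIioIci t)⟩

theorem nonempty_sigmaLex_sumLex_orderIso (hM : Indecomposable M) :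
    ∀ {n : ℕ} (L : Fin n → Type*) [∀ i, LinearOrder (L i)],
      (∀ i, Nonempty (L i ↪o M)) → (∀ i, ¬ Nonempty (M ↪o L i)) →
      Nonempty (((Σₗ i, L i) ⊕ₗ M) ≃o M)
  | 0, L, _, _, _ =>
    have : IsEmpty (Σₗ i, L i) := ⟨fun x => (ofLex x).1.elim0⟩
    ⟨OrderIso.emptySumLex⟩
  | n + 1, L, _, hemb, hnemb => by
    obtain ⟨e⟩ := nonempty_sigmaLex_sumLex_orderIso hM (fun i : Fin n => L i.succ)
      (fun i => hemb i.succ) (fun i => hnemb i.succ)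
    obtain ⟨f⟩ := hemb 0
    obtain ⟨e₀⟩ := hM.nonempty_sumLex_orderIso f (hnemb 0)
    exact ⟨((OrderIso.sumLexSigmaLexFinSucc L).symm.sumLexCongr (.refl M)).trans <|
      (OrderIso.sumLexAssoc _ _ _).trans <| ((OrderIso.refl _).sumLexCongr e).trans e₀⟩

end Indecomposable

/-- If `M` is an indecomposable well-order and `L₀, …, L_{n-1}` are linear orders each of
which embeds into `M` while `M` embeds into none of them, then `(Σ_{i<n} L i) + M` is
order isomorphic to `M`. -/
theorem statement0 {M : Type*} [LinearOrder M] [WellFoundedLT M]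
    (hM : Indecomposable M) (n : ℕ) (L : Fin n → Type*) [∀ i, LinearOrder (L i)]
    (hemb : ∀ i, Nonempty (L i ↪o M)) (hnemb : ∀ i, ¬ Nonempty (M ↪o L i)) :
    Nonempty (((Σₗ i, L i) ⊕ₗ M) ≃o M) :=
  hM.nonempty_sigmaLex_sumLex_orderIso L hemb hnemb
end

section
/- Let L be a linear order and M an indecomposable well-order such that there is no order embedding of M into L. Let n be a natural number and N_0, …, N_{n−1} linear orders each of which is order isomorphic to L or order isomorphic to M. If F is an order embedding of M into the lexicographic sum Σ_{i<n} N_i, then there exists an index i < n such that N_i is order isomorphic to M and the set {y ∈ N_i : (i, y) belongs to the range of F} is cofinal in N_i. -/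
private lemma lex_lt_iff_aux {n : ℕ} {N : Fin n → Type*} [∀ i, LinearOrder (N i)]
    {i : Fin n} {a b : N i} :
    toLex (⟨i, a⟩ : Σ j, N j) < toLex (⟨i, b⟩ : Σ j, N j) ↔ a < b := by
  rw [Sigma.Lex.lt_def]
  constructor
  · rintro (h | ⟨h, h2⟩)
    · exact absurd h (lt_irrefl _)
    · exact h2
  · intro h; exact Or.inr ⟨rfl, h⟩

private lemma lex_fst_le {n : ℕ} {N : Fin n → Type*} [∀ i, LinearOrder (N i)]
    {a b : Σₗ j, N j} (h : a ≤ b) : a.1 ≤ b.1 := by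
  rcases Sigma.Lex.le_def.1 h with h | ⟨h, _⟩
  · exact h.le
  · exact h.le

/-- If `M` is an indecomposable well-order which does not embed into the linear order `L`,
each `N i` is isomorphic to `L` or to `M`, and `F` embeds `M` into the lexicographic sum
`Σ_{i<n} N i`, then for some `i`, `N i ≅ M` and the set of `y : N i` with `(i, y)` in the
range of `F` is cofinal in `N i`. -/
theorem statement1 {L M : Type*} [LinearOrder L] [LinearOrder M] [WellFoundedLT M]
    (hM : Indecomposable M) (hnemb : ¬ Nonempty (M ↪o L))
    (n : ℕ) (N : Fin n → Type*) [∀ i, LinearOrder (N i)]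
    (hN : ∀ i, Nonempty (N i ≃o L) ∨ Nonempty (N i ≃o M))
    (F : M ↪o (Σₗ i, N i)) :
    ∃ i : Fin n, Nonempty (N i ≃o M) ∧
      ∀ y : N i, ∃ s : N i, y ≤ s ∧ toLex (⟨i, s⟩ : Σ i, N i) ∈ Set.range F := by
  classical
  have hMne : Nonempty M := by
    by_contra h
    rw [not_nonempty_iff] at h
    exact hnemb ⟨OrderEmbedding.ofIsEmpty⟩
  obtain ⟨m'⟩ := hMne
  -- the finite set of first components
  set T : Finset (Fin n) := Finset.univ.filter (fun j => ∃ m : M, (F m).1 = j) with hT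
  have hTne : T.Nonempty := ⟨(F m').1, by simp [hT]⟩
  set i : Fin n := T.max' hTne with hi
  obtain ⟨m0, hm0⟩ : ∃ m : M, (F m).1 = i := by
    have h := T.max'_mem hTne
    exact (Finset.mem_filter.mp h).2
  have hmax : ∀ m : M, (F m).1 ≤ i := by
    intro m
    exact T.le_max' _ (by simp [hT])
  have hkey : ∀ x : M, m0 ≤ x → (F x).1 = i := by
    intro x hx
    refine le_antisymm (hmax x) ?_
    rw [← hm0]
    exact lex_fst_le (F.monotone hx)
  obtain ⟨e⟩ := hM m0
  have hex : ∀ m : M, ∃ s : N i, F (e m).1 = toLex ⟨i, s⟩ := by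
    intro m
    have h := hkey (e m).1 (e m).2
    rcases hq : F ((e m : M)) with ⟨j, s⟩
    rw [hq] at h
    dsimp at h
    subst h
    exact ⟨s, rfl⟩
  choose g hg using hex
  have hgmono : StrictMono g := by
    intro a b hab
    have h1 : F (e a).1 < F (e b).1 := F.strictMono (Subtype.coe_lt_coe.2 (e.strictMono hab))
    rw [hg a, hg b] at h1
    exact lex_lt_iff_aux.1 h1
  rcases hN i with hψ | hφ
  · obtain ⟨ψ⟩ := hψ
    exact absurd ⟨OrderEmbedding.ofStrictMono (fun m => ψ (g m))
      (fun a b h => ψ.strictMono (hgmono h))⟩ hnemb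
  obtain ⟨φ⟩ := hφ
  refine ⟨i, ⟨φ⟩, ?_⟩
  intro y
  by_contra hcon
  push_neg at hcon
  have hlt : ∀ m : M, g m < y := by
    intro m
    by_contra hge
    push_neg at hge
    exact hcon (g m) hge ⟨(e m).1, hg m⟩
  have := (StrictMono.le_apply (f := fun m => φ (g m))
    (fun a b h => φ.strictMono (hgmono h)) (x := φ y))
  exact absurd this (not_le.2 (φ.strictMono (hlt (φ y))))
end

section
/- Let L be a linear order and M an indecomposable well-order such that there is no order embedding of M into L. Let n be a natural number and N_0, …, N_{n−1} linear orders each of which is order isomorphic to L or order isomorphic to M. If for some natural number k there is an order embedding of the lexicographic sum Σ_{j<k} M (i.e., k copies of M, which is M·k) into Σ_{i<n} N_i, then the number of indices i < n for which N_i is order isomorphic to M is at least k. -/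
/-! Each copy of `M` in `M·k` has a final segment mapped into a single summand `N i`; by
indecomposability all of `M` embeds there, so `N i ≅ M` since `M` does not embed into `L`.
These summands strictly increase from copy to copy: if two copies shared the summand
`N i ≅ M`, the embedding of `M` into `N i` obtained from the first would be bounded above by
the image of a point of the second, whereas a strictly monotone self-map `f` of a well-order
satisfies `x ≤ f x`. -/

theorem OrderEmbedding.le_apply_apply {α β : Type*} [Preorder α] [LinearOrder β] [WellFoundedLT β]
    (e : β ↪o α) (φ : α ↪o β) (a : α) : a ≤ e (φ a) :=
  φ.le_iff_le.1 ((φ.strictMono.comp e.strictMono).le_apply (x := φ a))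

namespace Sigma.Lex

variable {ι : Type*} {α : ι → Type*}

theorem monotone_fst [Preorder ι] [∀ i, Preorder (α i)] :
    Monotone fun p : Σₗ i, α i => p.1 := by
  intro a b h
  rcases le_def.1 h with h | ⟨h, _⟩
  exacts [h.le, h.le]

theorem toLex_mk_lt_toLex_mk_iff [Preorder ι] [∀ i, Preorder (α i)] {i : ι} {a b : α i} :
    toLex (⟨i, a⟩ : Σ i, α i) < toLex ⟨i, b⟩ ↔ a < b := by
  refine ⟨fun h => ?_, fun h => Sigma.Lex.right _ _ h⟩
  rcases lt_def.1 h with h | ⟨_, h⟩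
  exacts [(lt_irrefl _ h).elim, h]

def mkOrderEmbedding [Preorder ι] [∀ i, LinearOrder (α i)] (i : ι) : α i ↪o Σₗ i, α i :=
  OrderEmbedding.ofStrictMono (fun a => toLex ⟨i, a⟩) fun _ _ => toLex_mk_lt_toLex_mk_iff.2

theorem exists_orderEmbedding_of_fst_eq [Preorder ι] [∀ i, Preorder (α i)] {β : Type*}
    [LinearOrder β] {g : β → Σₗ i, α i} (hg : StrictMono g) {i : ι} (hi : ∀ x, (g x).1 = i) :
    ∃ e : β ↪o α i, ∀ x, g x = toLex ⟨i, e x⟩ := by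
  have hfiber : ∀ p : Σₗ i, α i, p.1 = i → ∃ a, p = toLex ⟨i, a⟩ := by
    rintro ⟨_, a⟩ rfl
    exact ⟨a, rfl⟩
  choose e he using fun x => hfiber (g x) (hi x)
  refine ⟨OrderEmbedding.ofStrictMono e fun x y hxy => ?_, he⟩
  simpa only [he, toLex_mk_lt_toLex_mk_iff] using hg hxy

theorem exists_eventually_fst_eq [LinearOrder ι] [Finite ι] [∀ i, Preorder (α i)] {β : Type*}
    [Preorder β] [Nonempty β] {g : β → Σₗ i, α i} (hg : Monotone g) :
    ∃ x₀, ∀ x, (g x).1 ≤ (g x₀).1 ∧ (x₀ ≤ x → (g x).1 = (g x₀).1) := by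
  obtain ⟨⟨_, x₀, rfl⟩, hx₀⟩ :=
    Finite.exists_max fun i : Set.range (fun x => (g x).1) => (i : ι)
  refine ⟨x₀, fun x => ⟨hx₀ ⟨_, x, rfl⟩, fun h => ?_⟩⟩
  exact le_antisymm (hx₀ ⟨_, x, rfl⟩) (monotone_fst (hg h))

theorem lt_fst_of_forall_lt [PartialOrder ι] [∀ i, Preorder (α i)] {M : Type*} [LinearOrder M]
    [WellFoundedLT M] [Nonempty M] {i : ι} (e : M ↪o α i) (φ : α i ↪o M) {p : Σₗ i, α i}
    (hp : ∀ x, toLex ⟨i, e x⟩ < p) : i < p.1 := by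
  obtain ⟨x⟩ := ‹Nonempty M›
  rcases (monotone_fst (hp x).le).lt_or_eq with h | h
  · exact h
  obtain ⟨j, a⟩ := p
  obtain rfl : i = j := h
  exact ((toLex_mk_lt_toLex_mk_iff.1 (hp (φ a))).not_ge (e.le_apply_apply φ a)).elim

end Sigma.Lex

open Sigma.Lex in
theorem Indecomposable.exists_orderEmbedding_fiber {M ι : Type*} [LinearOrder M] [Nonempty M]
    (hM : Indecomposable M) [LinearOrder ι] [Finite ι] {α : ι → Type*} [∀ i, Preorder (α i)]
    (g : M ↪o Σₗ i, α i) :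
    ∃ i, (∀ x, (g x).1 ≤ i) ∧ ∃ e : M ↪o α i, ∀ x, ∃ y, g y = toLex ⟨i, e x⟩ := by
  obtain ⟨x₀, hx₀⟩ := exists_eventually_fst_eq g.monotone
  obtain ⟨e, he⟩ := exists_orderEmbedding_of_fst_eq (g := fun x : {x // x₀ ≤ x} => g x)
    (g.strictMono.comp fun _ _ h => h) fun x => (hx₀ x).2 x.2
  obtain ⟨s⟩ := hM x₀
  exact ⟨_, fun x => (hx₀ x).1, s.trans e, fun x => ⟨s x, he (s x)⟩⟩

/-- If `M` is an indecomposable well-order which does not embed into the linear order `L`,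
each `N i` (`i < n`) is isomorphic to `L` or to `M`, and `M·k = Σ_{j<k} M` embeds into the
lexicographic sum `Σ_{i<n} N i`, then at least `k` of the `N i` are isomorphic to `M`. -/
theorem statement2 {L M : Type*} [LinearOrder L] [LinearOrder M] [WellFoundedLT M]
    (hM : Indecomposable M) (hnemb : ¬ Nonempty (M ↪o L))
    (n : ℕ) (N : Fin n → Type*) [∀ i, LinearOrder (N i)]
    (hN : ∀ i, Nonempty (N i ≃o L) ∨ Nonempty (N i ≃o M))
    (k : ℕ) (hemb : Nonempty ((Σₗ _ : Fin k, M) ↪o (Σₗ i, N i))) :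
    k ≤ Nat.card {i : Fin n // Nonempty (N i ≃o M)} := by
  obtain ⟨f⟩ := hemb
  have : Nonempty M := not_isEmpty_iff.1 fun _ => hnemb ⟨OrderEmbedding.ofIsEmpty⟩
  choose idx hle e he using fun j =>
    hM.exists_orderEmbedding_fiber ((Sigma.Lex.mkOrderEmbedding j).trans f)
  have hiso : ∀ j, Nonempty (N (idx j) ≃o M) := fun j =>
    (hN (idx j)).resolve_left fun ⟨ψ⟩ => hnemb ⟨(e j).trans ψ.toOrderEmbedding⟩
  have hidx : StrictMono idx := by
    intro j j' hjj'
    refine (Sigma.Lex.lt_fst_of_forall_lt (e j) (hiso j).some.toOrderEmbedding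
      (p := f (toLex ⟨j', Classical.arbitrary M⟩)) fun y => ?_).trans_le (hle j' _)
    obtain ⟨z, hz⟩ := he j y
    exact hz ▸ f.strictMono (Sigma.Lex.left _ _ hjj')
  calc k = Nat.card (Fin k) := (Nat.card_fin k).symm
    _ ≤ _ := Nat.card_le_card_of_injective (fun j => ⟨idx j, hiso j⟩)
      fun j j' h => hidx.injective (congrArg Subtype.val h)
end

section
/- Let L be a linear order and let T(L) be the tree of finite strictly decreasing sequences of elements of L (a prefix-closed set of finite lists containing the empty list). Then: (1) T(L) has an infinite path if and only if L has an infinite strictly decreasing sequence (so L is well-founded iff T(L) is well-founded); and (2) if L is well-founded, then the rank of T(L) equals the order type of L (the ordinal Ordinal.type of the strict order on L). -/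
/-!
Send a node of `T(L)` to its last entry, and the root to `⊤ : WithTop L`. Proper extension
becomes `<` on `WithTop L`, and conversely everything below the image of a node `σ` is the image
of an extension `σ ++ [b]`. A map with this lifting property transfers accessibility and preserves
rank, so `T(L)` is well-founded iff `WithTop L` is, and the rank of the root is the rank of `⊤`,
which is the order type of `L`. The infinite paths of `T(L)` are the descending sequences of `L`
because a list is a descending chain iff consecutive entries decrease.
-/

/-- The relation "τ properly extends σ" on a tree `T` of finite lists:
`extRel T τ σ` holds iff `σ` is a proper prefix of `τ`. -/
def extRel {α : Type*} (T : Set (List α)) : T → T → Prop :=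
  fun τ σ => σ.val <+: τ.val ∧ σ.val ≠ τ.val

/-- The rank of a node of a well-founded tree with respect to the proper-extension
relation: `rank σ = sup { rank τ + 1 : τ a one-step extension of σ in T }`. -/
noncomputable def treeRank {α : Type*} (T : Set (List α))
    (hwf : WellFounded (extRel T)) (σ : T) : Ordinal :=
  @IsWellFounded.rank _ (extRel T) ⟨hwf⟩ σ

/-- `T(L)`: the tree of finite strictly decreasing sequences of elements of `L`. -/
def descTree (L : Type*) [LinearOrder L] : Set (List L) :=
  {σ | σ.Chain' (· > ·)}

universe u

section Lift

variable {α β : Type*} {r : α → α → Prop} {s : β → β → Prop} {f : α → β}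

theorem Acc.of_lift (lift : ∀ a y, s y (f a) → ∃ a', r a' a ∧ f a' = y) {a : α}
    (ha : Acc r a) : Acc s (f a) := by
  induction ha with
  | intro a _ ih =>
    refine ⟨_, fun y hy => ?_⟩
    obtain ⟨a', ha', rfl⟩ := lift a y hy
    exact ih a' ha'

theorem WellFounded.of_surjective_lift (hf : Function.Surjective f)
    (lift : ∀ a y, s y (f a) → ∃ a', r a' a ∧ f a' = y) (h : WellFounded r) :
    WellFounded s :=
  ⟨hf.forall.2 fun a => (h.apply a).of_lift lift⟩

end Lift

theorem IsWellFounded.rank_eq_rank_of_lift {α β : Type u} {r : α → α → Prop}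
    {s : β → β → Prop} [IsWellFounded α r] [IsWellFounded β s] {f : α → β}
    (map : ∀ a a', r a' a → s (f a') (f a))
    (lift : ∀ a y, s y (f a) → ∃ a', r a' a ∧ f a' = y) (a : α) :
    rank r a = rank s (f a) := by
  induction a using IsWellFounded.induction r with
  | _ a ih =>
    rw [rank_eq, rank_eq]
    apply le_antisymm
    · refine Ordinal.iSup_le fun ⟨a', ha'⟩ => ?_
      rw [ih a' ha']
      exact Ordinal.le_iSup (fun y : {y // s y (f a)} => Order.succ (rank s y.1))
        ⟨_, map a a' ha'⟩
    · refine Ordinal.iSup_le fun ⟨y, hy⟩ => ?_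
      obtain ⟨a', ha', rfl⟩ := lift a y hy
      rw [← ih a' ha']
      exact Ordinal.le_iSup (fun b : {b // r b a} => Order.succ (rank r b.1)) ⟨_, ha'⟩

def WithTop.coePrincipalSeg (L : Type*) [Preorder L] : L <i WithTop L where
  toRelEmbedding := WithTop.coeOrderHom.ltEmbedding
  top := ⊤
  mem_range_iff_rel' y := by simp [WithTop.lt_top_iff_ne_top, WithTop.ne_top_iff_exists, eq_comm]

theorem Ordinal.typein_withTop_top (L : Type*) [LinearOrder L] [WellFoundedLT L] :
    typein (α := WithTop L) (· < ·) ⊤ = type ((· < ·) : L → L → Prop) :=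
  typein_top (WithTop.coePrincipalSeg L)

namespace List

variable {α : Type*}

def getLastOrTop (l : List α) : WithTop α :=
  l.getLast?.elim ⊤ (↑)

@[simp]
theorem getLastOrTop_nil : ([] : List α).getLastOrTop = ⊤ := rfl

@[simp]
theorem getLastOrTop_append_singleton (l : List α) (b : α) : (l ++ [b]).getLastOrTop = b := by
  simp [getLastOrTop]

theorem coe_lt_getLastOrTop_iff [LT α] {l : List α} {b : α} :
    (b : WithTop α) < l.getLastOrTop ↔ ∀ a ∈ l.getLast?, b < a := by
  cases h : l.getLast? <;> simp [getLastOrTop, h]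

end List

section DescendingTree

variable {L : Type*} [LinearOrder L]

theorem mem_descTree {σ : List L} : σ ∈ descTree L ↔ σ.IsChain (· > ·) := Iff.rfl

theorem nil_mem_descTree : [] ∈ descTree L := List.IsChain.nil

theorem append_singleton_mem_descTree {σ : List L} {b : L} :
    σ ++ [b] ∈ descTree L ↔ σ ∈ descTree L ∧ ∀ a ∈ σ.getLast?, b < a := by
  simp [mem_descTree, List.isChain_append]

theorem map_range_mem_descTree (f : ℕ → L) (k : ℕ) :
    (List.range k).map f ∈ descTree L ↔ ∀ m < k - 1, f (m + 1) < f m := by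
  rw [mem_descTree, List.isChain_map, List.isChain_range]

theorem forall_map_range_mem_descTree (f : ℕ → L) :
    (∀ k, (List.range k).map f ∈ descTree L) ↔ ∀ n, f (n + 1) < f n := by
  simp only [map_range_mem_descTree]
  exact ⟨fun h n => h (n + 2) n (by omega), fun h k m _ => h m⟩

theorem getLastOrTop_lt_of_prefix {σ τ : List L} (hτ : τ ∈ descTree L) (hp : σ <+: τ)
    (hne : σ ≠ τ) : τ.getLastOrTop < σ.getLastOrTop := by
  obtain ⟨ρ, rfl⟩ := hp
  obtain rfl | ⟨ρ, b, rfl⟩ := ρ.eq_nil_or_concat'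
  · simp at hne
  have hlt : ∀ a ∈ σ ++ ρ, b < a := by
    have := List.isChain_iff_pairwise.mp (mem_descTree.mp hτ)
    rw [← List.append_assoc, List.pairwise_append] at this
    exact fun a ha => this.2.2 a ha b (List.mem_singleton_self b)
  rw [← List.append_assoc, List.getLastOrTop_append_singleton, List.coe_lt_getLastOrTop_iff]
  exact fun a ha => hlt a (List.mem_append_left ρ (List.mem_of_getLast? ha))

theorem getLastOrTop_lt_of_extRel {σ τ : descTree L} (h : extRel (descTree L) τ σ) :
    τ.1.getLastOrTop < σ.1.getLastOrTop :=
  getLastOrTop_lt_of_prefix τ.2 h.1 h.2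

theorem exists_extRel_getLastOrTop_eq (σ : descTree L) {y : WithTop L}
    (hy : y < σ.1.getLastOrTop) : ∃ τ, extRel (descTree L) τ σ ∧ τ.1.getLastOrTop = y := by
  obtain ⟨b, rfl⟩ := WithTop.ne_top_iff_exists.mp hy.ne_top
  have hb := List.coe_lt_getLastOrTop_iff.mp hy
  exact ⟨⟨σ.1 ++ [b], append_singleton_mem_descTree.mpr ⟨σ.2, hb⟩⟩,
    ⟨List.prefix_append _ _, by simp⟩, List.getLastOrTop_append_singleton _ _⟩

theorem getLastOrTop_surjective :
    Function.Surjective fun σ : descTree L => σ.1.getLastOrTop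
  | ⊤ => ⟨⟨[], nil_mem_descTree⟩, rfl⟩
  | (b : L) => ⟨⟨[b], List.IsChain.singleton b⟩, List.getLastOrTop_append_singleton [] b⟩

theorem wellFounded_extRel_descTree_iff :
    WellFounded (extRel (descTree L)) ↔ WellFounded ((· < ·) : L → L → Prop) := by
  refine ⟨fun h => ?_, fun h => ?_⟩
  · have : WellFounded ((· < ·) : WithTop L → WithTop L → Prop) :=
      h.of_surjective_lift getLastOrTop_surjective fun σ _ => exists_extRel_getLastOrTop_eq σ
    exact Subrelation.wf (WithTop.coe_lt_coe.2 ·) (InvImage.wf _ this)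
  · have : WellFoundedLT L := ⟨h⟩
    exact Subrelation.wf getLastOrTop_lt_of_extRel (InvImage.wf _ wellFounded_lt)

theorem treeRank_descTree [WellFoundedLT L] (hwf : WellFounded (extRel (descTree L)))
    (σ : descTree L) :
    treeRank (descTree L) hwf σ = Ordinal.typein (α := WithTop L) (· < ·) σ.1.getLastOrTop := by
  have : IsWellFounded _ (extRel (descTree L)) := ⟨hwf⟩
  rw [treeRank, IsWellFounded.rank_eq_rank_of_lift (r := extRel (descTree L))
    (fun _ _ => getLastOrTop_lt_of_extRel)
    (fun σ _ => exists_extRel_getLastOrTop_eq σ), IsWellFounded.rank_eq_typein]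

end DescendingTree

/-- (1) `T(L)` has an infinite path iff `L` has an infinite strictly decreasing sequence;
equivalently, `L` is well-founded iff `T(L)` is well-founded; and
(2) if `L` is well-founded, the rank of `T(L)` equals the order type of `L`. -/
theorem statement4 (L : Type*) [LinearOrder L] :
    ((∃ f : ℕ → L, ∀ k : ℕ, (List.range k).map f ∈ descTree L) ↔
      ∃ f : ℕ → L, ∀ n : ℕ, f (n + 1) < f n) ∧
    (WellFounded ((· < ·) : L → L → Prop) ↔ WellFounded (extRel (descTree L))) ∧
    (∀ (h : IsWellOrder L (· < ·)) (hwf : WellFounded (extRel (descTree L))),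
      treeRank (descTree L) hwf ⟨[], by simp [descTree]; exact List.isChain_nil⟩ =
        @Ordinal.type L (· < ·) h) := by
  refine ⟨exists_congr forall_map_range_mem_descTree, wellFounded_extRel_descTree_iff.symm,
    fun h hwf => ?_⟩
  have : WellFoundedLT L := h.toIsWellFounded
  rw [treeRank_descTree, List.getLastOrTop_nil, Ordinal.typein_withTop_top]
end

section
/- Let S and T be nonempty well-founded trees on ℕ. If rank(S) ≤ rank(T), then the Kleene–Brouwer order of S order-embeds into the Kleene–Brouwer order of T^∞. If moreover rank(S) < rank(T), then the order type (Ordinal.type) of the Kleene–Brouwer order of S is strictly less than the order type of the Kleene–Brouwer order of T^∞. -/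
/-- A tree: a set of finite lists containing the empty list and closed under prefixes. -/
def IsTree {α : Type*} (T : Set (List α)) : Prop :=
  [] ∈ T ∧ ∀ ⦃σ τ : List α⦄, σ <+: τ → τ ∈ T → σ ∈ T

/-- `T` has an infinite path: an infinite sequence all of whose finite initial
segments belong to `T`. -/
def HasInfPath {α : Type*} (T : Set (List α)) : Prop :=
  ∃ f : ℕ → α, ∀ k : ℕ, (List.range k).map f ∈ T

/-- The Kleene–Brouwer order induced by a relation `r` on the alphabet. -/
def KBLt {α : Type*} (r : α → α → Prop) (σ τ : List α) : Prop :=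
  (τ <+: σ ∧ σ ≠ τ) ∨
    ∃ (i : ℕ) (h1 : i < σ.length) (h2 : i < τ.length),
      σ.take i = τ.take i ∧ r (σ.get ⟨i, h1⟩) (τ.get ⟨i, h2⟩)

/-- The linear order of type ω on `List ℕ × ℕ`, transported from `ℕ` along the canonical
denumerable encoding. -/
def encLt (a b : List ℕ × ℕ) : Prop :=
  Encodable.encode a < Encodable.encode b

/-- The tree `T^∞` over the alphabet `List ℕ × ℕ`. -/
def inftyTree (T : Set (List ℕ)) : Set (List (List ℕ × ℕ)) :=
  {l | (∀ p ∈ l, p.1 ∈ T ∧ p.1 ≠ []) ∧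
       l.Chain' (fun p q => p.1 <+: q.1 ∧ p.1 ≠ q.1)}


/-! Ranks let `S` be simulated inside `T`: if `rank p ≤ rank q`, every child of `p` has rank
below `rank q`, so it is dominated by some proper extension of `q`. Walking down a path of `S`
and simulating each step maps it to a chain in `T`; labelling the step to the `n`-th child with a
pair whose code increases with `n` makes the resulting map `S → T^∞` preserve the Kleene–Brouwer
order, hence an embedding, since `KB(S)` is linear. When `rank S < rank T`, start the simulation
at a child `ρ` of the root of `T` and prefix every image with `(ρ, 0)`: the images then lie below
the node `[(ρ, c)]` for any `c` with `code (ρ, c) > code (ρ, 0)`, a proper initial segment. -/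

namespace KBLt

variable {α : Type*} {r : α → α → Prop}

@[simp]
theorem not_nil_left (r : α → α → Prop) (τ : List α) : ¬ KBLt r [] τ := by
  rintro (⟨hp, hne⟩ | ⟨i, hi, -⟩)
  · exact hne (List.prefix_nil.1 hp).symm
  · exact absurd hi (Nat.not_lt_zero i)

@[simp]
theorem nil_right_iff {σ : List α} : KBLt r σ [] ↔ σ ≠ [] := by
  refine ⟨?_, fun h => Or.inl ⟨List.nil_prefix, h⟩⟩
  rintro (⟨-, hne⟩ | ⟨i, -, hi, -⟩)
  · exact hne
  · exact absurd hi (Nat.not_lt_zero i)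

@[simp]
theorem cons_cons_iff {a b : α} {σ τ : List α} :
    KBLt r (a :: σ) (b :: τ) ↔ r a b ∨ a = b ∧ KBLt r σ τ := by
  constructor
  · rintro (⟨hp, hne⟩ | ⟨_ | i, hi, hi', htake, hab⟩)
    · obtain ⟨rfl, hp'⟩ := List.cons_prefix_cons.1 hp
      exact Or.inr ⟨rfl, Or.inl ⟨hp', by rintro rfl; exact hne rfl⟩⟩
    · exact Or.inl hab
    · obtain ⟨rfl, htake'⟩ := List.cons_eq_cons.1 htake
      exact Or.inr ⟨rfl, Or.inr ⟨i, Nat.lt_of_succ_lt_succ hi, Nat.lt_of_succ_lt_succ hi',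
        htake', hab⟩⟩
  · rintro (hab | ⟨rfl, ⟨hp, hne⟩ | ⟨i, hi, hi', htake, hab⟩⟩)
    · exact Or.inr ⟨0, Nat.succ_pos _, Nat.succ_pos _, rfl, hab⟩
    · exact Or.inl ⟨List.cons_prefix_cons.2 ⟨rfl, hp⟩, by simpa using hne⟩
    · exact Or.inr ⟨i + 1, Nat.succ_lt_succ hi, Nat.succ_lt_succ hi', by simp [htake], hab⟩

instance [Std.Trichotomous r] : Std.Trichotomous (KBLt r) where
  trichotomous σ τ := by
    induction σ generalizing τ with
    | nil => cases τ <;> simp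
    | cons a σ ih =>
      cases τ with
      | nil => simp
      | cons b τ =>
        simp only [cons_cons_iff, not_or, not_and]
        rintro ⟨hab, hσ⟩ ⟨hba, hτ⟩
        obtain rfl := Std.Trichotomous.trichotomous a b hab hba
        rw [ih τ (hσ rfl) (hτ rfl)]

instance [Std.Asymm r] : Std.Asymm (KBLt r) where
  asymm σ τ := by
    induction σ generalizing τ with
    | nil => simp
    | cons a σ ih =>
      cases τ with
      | nil => simp
      | cons b τ =>
        simp only [cons_cons_iff, not_or, not_and]
        rintro (hab | ⟨rfl, hστ⟩)
        · exact ⟨Std.Asymm.asymm a b hab, by rintro rfl; exact (Std.Asymm.asymm b b hab hab).elim⟩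
        · exact ⟨fun h => Std.Asymm.asymm a a h h, fun _ => ih τ hστ⟩

end KBLt

def transduce {α β γ : Type*} (step : γ → α → γ × β) : γ → List α → List β
  | _, [] => []
  | c, a :: σ => (step c a).2 :: transduce step (step c a).1 σ

theorem kbLt_transduce {α β γ : Type*} {r : α → α → Prop} {s : β → β → Prop}
    {step : γ → α → γ × β} (hstep : ∀ c a b, r a b → s (step c a).2 (step c b).2)
    {σ τ : List α} (c : γ) (h : KBLt r σ τ) : KBLt s (transduce step c σ) (transduce step c τ) := by
  induction σ generalizing c τ with
  | nil => simp at h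
  | cons a σ ih =>
    cases τ with
    | nil => simp [transduce]
    | cons b τ =>
      simp only [transduce, KBLt.cons_cons_iff] at h ⊢
      rcases h with hab | ⟨rfl, h⟩
      · exact Or.inl (hstep c a b hab)
      · exact Or.inr ⟨rfl, ih _ h⟩

theorem Encodable.exists_lt_encode_pair {α β : Type*} [Encodable α] [Encodable β] [Infinite β]
    (x : α) (n : ℕ) : ∃ b : β, n < Encodable.encode (x, b) := by
  have hinj : Function.Injective fun b : β => Encodable.encode (x, b) :=
    fun b b' h => (Prod.ext_iff.1 (Encodable.encode_injective h)).2
  obtain ⟨_, ⟨b, rfl⟩, hb⟩ := (Set.infinite_range_of_injective hinj).exists_gt n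
  exact ⟨b, hb⟩

theorem Encodable.exists_strictMono_encode_pair {α β : Type*} [Encodable α] [Encodable β]
    [Infinite β] (f : ℕ → α) : ∃ m : ℕ → β, StrictMono fun n => Encodable.encode (f n, m n) := by
  choose next hnext using fun (x : α) (n : ℕ) => Encodable.exists_lt_encode_pair (β := β) x n
  let m : ℕ → β := fun n =>
    Nat.rec (next (f 0) 0) (fun k mk => next (f (k + 1)) (Encodable.encode (f k, mk))) n
  exact ⟨m, strictMono_nat_of_lt_succ fun n => hnext _ _⟩

theorem IsWellFounded.exists_rel_le_rank {α : Type*} {r : α → α → Prop} [IsWellFounded α r]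
    {o : Ordinal} {a : α} (h : o < IsWellFounded.rank r a) :
    ∃ b, r b a ∧ o ≤ IsWellFounded.rank r b := by
  rw [IsWellFounded.rank_eq, Ordinal.lt_iSup_iff] at h
  obtain ⟨⟨b, hba⟩, hb⟩ := h
  exact ⟨b, hba, Order.lt_succ_iff.1 hb⟩

universe u in
theorem Ordinal.type_lt_of_relEmbedding_lt {α β : Type u} {r : α → α → Prop}
    {s : β → β → Prop} [IsWellOrder α r] [IsWellOrder β s] (e : r ↪r s) {b : β}
    (he : ∀ a, s (e a) b) : Ordinal.type r < Ordinal.type s :=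
  calc Ordinal.type r ≤ Ordinal.type (Subrel s (s · b)) :=
        (e.codRestrict {x | s x b} he).ordinal_type_le
    _ = Ordinal.typein s b := Ordinal.type_subrel s b
    _ < Ordinal.type s := Ordinal.typein_lt_type s b

theorem inftyTree_nil (T : Set (List ℕ)) : [] ∈ inftyTree T :=
  ⟨by simp, List.IsChain.nil⟩

theorem cons_mem_inftyTree {T : Set (List ℕ)} {x : List ℕ × ℕ} {l : List (List ℕ × ℕ)} :
    x :: l ∈ inftyTree T ↔
      (x.1 ∈ T ∧ x.1 ≠ []) ∧ (∀ y ∈ l.head?, x.1 <+: y.1 ∧ x.1 ≠ y.1) ∧ l ∈ inftyTree T := by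
  simp only [inftyTree, Set.mem_ofPred_eq, List.forall_mem_cons]
  constructor
  · rintro ⟨⟨hx, hl⟩, hc⟩
    exact ⟨hx, (List.isChain_cons.1 hc).1, hl, (List.isChain_cons.1 hc).2⟩
  · rintro ⟨hx, hhead, hl, hc⟩
    exact ⟨⟨hx, hl⟩, List.isChain_cons.2 ⟨hhead, hc⟩⟩

section RankComparison

variable {S T : Set (List ℕ)} (hSwf : WellFounded (extRel S)) (hTwf : WellFounded (extRel T))

def RankLe (p q : List ℕ) : Prop :=
  ∃ (hp : p ∈ S) (hq : q ∈ T), treeRank S hSwf ⟨p, hp⟩ ≤ treeRank T hTwf ⟨q, hq⟩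

variable {hSwf hTwf}

theorem RankLe.exists_extension {p q : List ℕ} (h : RankLe hSwf hTwf p q) {a : ℕ}
    (ha : p ++ [a] ∈ S) : ∃ q', (q <+: q' ∧ q ≠ q') ∧ RankLe hSwf hTwf (p ++ [a]) q' := by
  obtain ⟨hp, hq, hle⟩ := h
  have : IsWellFounded _ (extRel S) := ⟨hSwf⟩
  have : IsWellFounded _ (extRel T) := ⟨hTwf⟩
  have hlt : treeRank S hSwf ⟨p ++ [a], ha⟩ < treeRank S hSwf ⟨p, hp⟩ :=
    IsWellFounded.rank_lt_of_rel (r := extRel S) ⟨List.prefix_append p [a], by simp⟩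
  obtain ⟨⟨q', hq'⟩, hext, hle'⟩ := IsWellFounded.exists_rel_le_rank (hlt.trans_le hle)
  exact ⟨q', hext, ha, hq', hle'⟩

theorem exists_strictMono_encode_extensions (p q : List ℕ) :
    ∃ f : ℕ → List ℕ × ℕ, StrictMono (fun a => Encodable.encode (f a)) ∧
      ∀ a, RankLe hSwf hTwf p q → p ++ [a] ∈ S →
        (q <+: (f a).1 ∧ q ≠ (f a).1) ∧ RankLe hSwf hTwf (p ++ [a]) (f a).1 := by
  have hext : ∀ a : ℕ, ∃ q', RankLe hSwf hTwf p q → p ++ [a] ∈ S →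
      (q <+: q' ∧ q ≠ q') ∧ RankLe hSwf hTwf (p ++ [a]) q' := by
    intro a
    by_cases h : RankLe hSwf hTwf p q ∧ p ++ [a] ∈ S
    · obtain ⟨q', hq'⟩ := h.1.exists_extension h.2
      exact ⟨q', fun _ _ => hq'⟩
    · exact ⟨q, fun h₁ h₂ => absurd ⟨h₁, h₂⟩ h⟩
  choose g hg using hext
  obtain ⟨m, hm⟩ := Encodable.exists_strictMono_encode_pair (β := ℕ) g
  exact ⟨fun a => (g a, m a), hm, hg⟩

theorem exists_kbLt_map_inftyTree (hS : IsTree S) {ρ : List ℕ} (hρ : RankLe hSwf hTwf [] ρ) :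
    ∃ F : List ℕ → List (List ℕ × ℕ),
      (∀ σ ∈ S, F σ ∈ inftyTree T ∧ ∀ x ∈ (F σ).head?, ρ <+: x.1 ∧ ρ ≠ x.1) ∧
      ∀ σ τ, KBLt (· < ·) σ τ → KBLt encLt (F σ) (F τ) := by
  choose f hmono hf using exists_strictMono_encode_extensions (hSwf := hSwf) (hTwf := hTwf)
  -- the state is the current node of `S` together with its image in `T`
  let step (c : List ℕ × List ℕ) (a : ℕ) : (List ℕ × List ℕ) × (List ℕ × ℕ) :=
    ((c.1 ++ [a], (f c.1 c.2 a).1), f c.1 c.2 a)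
  have hmem : ∀ σ p q, RankLe hSwf hTwf p q → p ++ σ ∈ S →
      transduce step (p, q) σ ∈ inftyTree T ∧
        ∀ x ∈ (transduce step (p, q) σ).head?, q <+: x.1 ∧ q ≠ x.1 := by
    intro σ
    induction σ with
    | nil => exact fun _ _ _ _ => ⟨inftyTree_nil T, by simp [transduce]⟩
    | cons a σ ih =>
      intro p q hpq hσ
      obtain ⟨⟨hpre, hne⟩, hrank⟩ := hf p q a hpq (hS.2 (by simp) hσ)
      obtain ⟨hmem, hhead⟩ := ih _ _ hrank (by simpa using hσ)
      have hne_nil : (f p q a).1 ≠ [] := by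
        rintro h
        exact hne ((List.prefix_nil.1 (h ▸ hpre)).trans h.symm)
      exact ⟨cons_mem_inftyTree.2 ⟨⟨hrank.2.1, hne_nil⟩, hhead, hmem⟩,
        by simpa [transduce, step] using And.intro hpre hne⟩
  exact ⟨transduce step ([], ρ), fun σ hσ => hmem σ [] ρ hρ hσ,
    fun σ τ => kbLt_transduce (fun c a b hab => hmono c.1 c.2 hab) _⟩

end RankComparison

instance : Std.Asymm encLt := ⟨fun _ _ h h' => lt_asymm h h'⟩

def kbLtEmbedding {α β : Type*} {r : α → α → Prop} {s : β → β → Prop} [Std.Trichotomous r]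
    [Std.Asymm s] {A : Set (List α)} {B : Set (List β)} (F : List α → List β)
    (hF : ∀ σ ∈ A, F σ ∈ B) (hkb : ∀ σ τ, KBLt r σ τ → KBLt s (F σ) (F τ)) :
    Subrel (KBLt r) (· ∈ A) ↪r Subrel (KBLt s) (· ∈ B) :=
  RelEmbedding.ofMonotone (fun σ => ⟨F σ, hF σ σ.2⟩) fun σ τ h => hkb σ τ h

theorem statement6_general (S T : Set (List ℕ)) (hS : IsTree S) (hT : IsTree T) :
    ∀ (hSwf : WellFounded (extRel S)) (hTwf : WellFounded (extRel T)),
      (treeRank S hSwf ⟨[], hS.1⟩ ≤ treeRank T hTwf ⟨[], hT.1⟩ →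
        Nonempty ((fun a b : S => KBLt (· < ·) a.val b.val) ↪r
                  (fun a b : inftyTree T => KBLt encLt a.val b.val))) ∧
      (treeRank S hSwf ⟨[], hS.1⟩ < treeRank T hTwf ⟨[], hT.1⟩ →
        ∀ (h1 : IsWellOrder S (fun a b : S => KBLt (· < ·) a.val b.val))
          (h2 : IsWellOrder (inftyTree T)
            (fun a b : inftyTree T => KBLt encLt a.val b.val)),
          @Ordinal.type _ _ h1 < @Ordinal.type _ _ h2) := by
  intro hSwf hTwf
  refine ⟨fun hle => ?_, fun hlt h1 h2 => ?_⟩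
  · have hroot : RankLe hSwf hTwf [] [] := ⟨hS.1, hT.1, hle⟩
    obtain ⟨F, hF, hkb⟩ := exists_kbLt_map_inftyTree hS hroot
    exact ⟨kbLtEmbedding F (fun σ hσ => (hF σ hσ).1) hkb⟩
  have : IsWellFounded _ (extRel T) := ⟨hTwf⟩
  obtain ⟨⟨ρ, hρ⟩, ⟨-, hρne⟩, hle⟩ := IsWellFounded.exists_rel_le_rank hlt
  have hroot : RankLe hSwf hTwf [] ρ := ⟨hS.1, hρ, hle⟩
  obtain ⟨F, hF, hkb⟩ := exists_kbLt_map_inftyTree hS hroot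
  obtain ⟨c, hc⟩ := Encodable.exists_lt_encode_pair (β := ℕ) ρ (Encodable.encode (ρ, 0))
  have hmem : ∀ σ ∈ S, (ρ, 0) :: F σ ∈ inftyTree T := fun σ hσ =>
    cons_mem_inftyTree.2 ⟨⟨hρ, Ne.symm hρne⟩, (hF σ hσ).2, (hF σ hσ).1⟩
  let top : inftyTree T := ⟨[(ρ, c)], cons_mem_inftyTree.2
    ⟨⟨hρ, Ne.symm hρne⟩, by simp, inftyTree_nil T⟩⟩
  let e : (fun a b : S => KBLt (· < ·) a.val b.val) ↪r
      (fun a b : inftyTree T => KBLt encLt a.val b.val) :=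
    kbLtEmbedding _ hmem fun σ τ h => KBLt.cons_cons_iff.2 (Or.inr ⟨rfl, hkb σ τ h⟩)
  exact Ordinal.type_lt_of_relEmbedding_lt e (b := top) fun σ =>
    KBLt.cons_cons_iff.2 (Or.inl hc)

/-- For nonempty well-founded trees `S, T` on ℕ: if `rank S ≤ rank T` then `KB(S)`
order-embeds into `KB(T^∞)`; if `rank S < rank T` then the order type of `KB(S)` is
strictly below the order type of `KB(T^∞)`. -/
theorem statement6 (S T : Set (List ℕ)) (hS : IsTree S) (hT : IsTree T)
    (hSpath : ¬ HasInfPath S) (hTpath : ¬ HasInfPath T) :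
    ∀ (hSwf : WellFounded (extRel S)) (hTwf : WellFounded (extRel T)),
      (treeRank S hSwf ⟨[], hS.1⟩ ≤ treeRank T hTwf ⟨[], hT.1⟩ →
        Nonempty ((fun a b : S => KBLt (· < ·) a.val b.val) ↪r
                  (fun a b : inftyTree T => KBLt encLt a.val b.val))) ∧
      (treeRank S hSwf ⟨[], hS.1⟩ < treeRank T hTwf ⟨[], hT.1⟩ →
        ∀ (h1 : IsWellOrder S (fun a b : S => KBLt (· < ·) a.val b.val))
          (h2 : IsWellOrder (inftyTree T)
            (fun a b : inftyTree T => KBLt encLt a.val b.val)),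
          @Ordinal.type _ _ h1 < @Ordinal.type _ _ h2) :=
  statement6_general S T hS hT
end

section
/- View trees as graphs as follows: a tree T ⊆ List ℕ (containing the empty list and prefix-closed) is the graph whose vertices are the elements of T and whose edges join each σ ∈ T to its one-step extensions in T. Then: (1) the tree {⟨⟩} consisting of only the empty list has exactly one König cover, namely (∅, ∅); in particular its root is outside the cover of every König cover (it codes the bit 0). (2) For the tree {⟨⟩, ⟨0⟩, ⟨1⟩}, every König cover (C, M) satisfies C = {⟨⟩} and M consists of exactly one of the two edges {⟨⟩,⟨0⟩}, {⟨⟩,⟨1⟩}; in particular the root belongs to the cover of every König cover (it codes the bit 1). -/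
/-- `(C, M)` is a König cover of the simple graph `G`. -/
def IsKonigCover {V : Type*} (G : SimpleGraph V) (C : Set V) (M : Set (Sym2 V)) : Prop :=
  M ⊆ G.edgeSet ∧
  (M.Pairwise fun e f => ∀ v, v ∈ e → v ∉ f) ∧
  (∀ e ∈ G.edgeSet, ∃ v ∈ e, v ∈ C) ∧
  (∀ e ∈ M, ∃! v, v ∈ e ∧ v ∈ C) ∧
  (∀ v ∈ C, ∃ e ∈ M, v ∈ e)

/-- A tree `T ⊆ List ℕ` viewed as a graph: edges join each `σ ∈ T` to its one-step
extensions in `T`. -/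
def treeGraph (T : Set (List ℕ)) : SimpleGraph (List ℕ) where
  Adj s t := s ∈ T ∧ t ∈ T ∧ ((∃ n, t = s ++ [n]) ∨ ∃ n, s = t ++ [n])
  symm := by
    constructor
    rintro s t ⟨hs, ht, h | h⟩
    · exact ⟨ht, hs, Or.inr h⟩
    · exact ⟨ht, hs, Or.inl h⟩
  loopless := by
    constructor
    rintro s ⟨-, -, ⟨n, h⟩ | ⟨n, h⟩⟩ <;>
      simpa using congrArg List.length h

/-! The one-vertex tree has no edges, so only `(∅, ∅)` is a König cover. The tree
`{⟨⟩, ⟨0⟩, ⟨1⟩}` is a star with centre `⟨⟩` and two leaves: its two edges share the root, so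
`M` is a single edge; the other edge must be covered, and its leaf lies in no edge of `M`, so
the root is in `C`, and duality then keeps the matched leaf out of `C`. -/

lemma treeGraph_singleton_nil : treeGraph {[]} = ⊥ := by
  ext s t
  simp only [treeGraph, Set.mem_singleton_iff, SimpleGraph.bot_adj, iff_false]
  rintro ⟨rfl, rfl, ⟨n, h⟩ | ⟨n, h⟩⟩ <;> simp at h

lemma treeGraph_cherry_adj_iff (s t : List ℕ) : (treeGraph {[], [0], [1]}).Adj s t ↔
    (s = [] ∧ t = [0]) ∨ (s = [] ∧ t = [1]) ∨ (s = [0] ∧ t = []) ∨ (s = [1] ∧ t = []) := by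
  constructor
  · rintro ⟨hs, ht, h⟩
    simp only [Set.mem_insert_iff, Set.mem_singleton_iff] at hs ht
    rcases hs with rfl | rfl | rfl <;> rcases ht with rfl | rfl | rfl <;>
      rcases h with ⟨n, h⟩ | ⟨n, h⟩ <;> simp_all
  · rintro (⟨rfl, rfl⟩ | ⟨rfl, rfl⟩ | ⟨rfl, rfl⟩ | ⟨rfl, rfl⟩) <;>
      refine ⟨by simp, by simp, ?_⟩
    exacts [Or.inl ⟨0, rfl⟩, Or.inl ⟨1, rfl⟩, Or.inr ⟨0, rfl⟩, Or.inr ⟨1, rfl⟩]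

lemma treeGraph_cherry_edgeSet : (treeGraph {[], [0], [1]}).edgeSet =
    {s(([] : List ℕ), [0]), s(([] : List ℕ), [1])} := by
  ext e
  induction e using Sym2.ind with
  | _ s t =>
    rw [SimpleGraph.mem_edgeSet, treeGraph_cherry_adj_iff]
    simp only [Set.mem_insert_iff, Set.mem_singleton_iff, Sym2.eq, Sym2.rel_iff',
      Prod.mk.injEq, Prod.swap_prod_mk]
    tauto

lemma isKonigCover_bot_iff {V : Type*} {C : Set V} {M : Set (Sym2 V)} :
    IsKonigCover (⊥ : SimpleGraph V) C M ↔ C = ∅ ∧ M = ∅ := by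
  constructor
  · rintro ⟨hM, -, -, -, hC⟩
    rw [SimpleGraph.edgeSet_bot, Set.subset_empty_iff] at hM
    subst hM
    exact ⟨Set.eq_empty_of_forall_notMem fun v hv ↦ by simpa using hC v hv, rfl⟩
  · rintro ⟨rfl, rfl⟩
    simp [IsKonigCover]

namespace IsKonigCover

variable {V : Type*} {G : SimpleGraph V} {C : Set V} {M : Set (Sym2 V)} {r a b : V}

lemma eq_of_mem_of_mem (h : IsKonigCover G C M) {e f : Sym2 V} (he : e ∈ M) (hf : f ∈ M)
    {v : V} (hve : v ∈ e) (hvf : v ∈ f) : e = f := by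
  by_contra hne
  exact h.2.1 he hf hne v hve hvf

lemma eq_center_of_mem_star (h : IsKonigCover G C M) (hG : G.edgeSet = {s(r, a), s(r, b)})
    (hab : a ≠ b) (ha : s(r, a) ∈ M) : C = {r} ∧ M = {s(r, a)} := by
  have hra : r ≠ a := (show G.Adj r a by rw [← SimpleGraph.mem_edgeSet, hG]; simp).ne
  have hrb : r ≠ b := (show G.Adj r b by rw [← SimpleGraph.mem_edgeSet, hG]; simp).ne
  have hM : M = {s(r, a)} := by
    refine Set.eq_singleton_iff_unique_mem.2 ⟨ha, fun f hf ↦ ?_⟩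
    rcases (hG ▸ h.1 hf : f ∈ ({s(r, a), s(r, b)} : Set _)) with rfl | rfl
    · rfl
    · exact h.eq_of_mem_of_mem hf ha (Sym2.mem_mk_left r b) (Sym2.mem_mk_left r a)
  have hbC : b ∉ C := fun hb ↦ by
    obtain ⟨e, he, hbe⟩ := h.2.2.2.2 b hb
    rw [hM, Set.mem_singleton_iff] at he
    subst he
    rcases Sym2.mem_iff.1 hbe with rfl | rfl <;> contradiction
  have hrC : r ∈ C := by
    obtain ⟨v, hv, hvC⟩ := h.2.2.1 s(r, b) (hG ▸ by simp)
    rcases Sym2.mem_iff.1 hv with rfl | rfl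
    exacts [hvC, absurd hvC hbC]
  refine ⟨Set.eq_singleton_iff_unique_mem.2 ⟨hrC, fun v hv ↦ ?_⟩, hM⟩
  obtain ⟨e, he, hve⟩ := h.2.2.2.2 v hv
  rw [hM, Set.mem_singleton_iff] at he
  subst he
  rcases Sym2.mem_iff.1 hve with rfl | rfl
  · rfl
  · -- both endpoints of the matching edge would lie in `C`
    exact ((h.2.2.2.1 _ ha).unique ⟨Sym2.mem_mk_left _ _, hrC⟩ ⟨Sym2.mem_mk_right _ _, hv⟩).symm

lemma eq_center_of_edgeSet_eq_star (h : IsKonigCover G C M)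
    (hG : G.edgeSet = {s(r, a), s(r, b)}) (hab : a ≠ b) :
    C = {r} ∧ (M = {s(r, a)} ∨ M = {s(r, b)}) := by
  obtain ⟨v, hv, hvC⟩ := h.2.2.1 s(r, a) (hG ▸ by simp)
  obtain ⟨e, he, -⟩ := h.2.2.2.2 v hvC
  rcases (hG ▸ h.1 he : e ∈ ({s(r, a), s(r, b)} : Set _)) with rfl | rfl
  · exact (h.eq_center_of_mem_star hG hab he).imp_right Or.inl
  · exact (h.eq_center_of_mem_star (hG.trans (Set.pair_comm _ _)) hab.symm he).imp_right Or.inr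

end IsKonigCover

/-- (1) The tree `{⟨⟩}` has exactly one König cover, namely `(∅, ∅)`; in particular its
root lies outside the cover of every König cover (it codes the bit 0).
(2) For the tree `{⟨⟩, ⟨0⟩, ⟨1⟩}`, every König cover `(C, M)` has `C = {⟨⟩}` and `M`
consisting of exactly one of the two edges; in particular the root lies in the cover of
every König cover (it codes the bit 1). -/
theorem statement8 :
    (∀ (C : Set (List ℕ)) (M : Set (Sym2 (List ℕ))),
      IsKonigCover (treeGraph {[]}) C M ↔ (C = ∅ ∧ M = ∅)) ∧
    (∀ (C : Set (List ℕ)) (M : Set (Sym2 (List ℕ))),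
      IsKonigCover (treeGraph {[]}) C M → [] ∉ C) ∧
    (∀ (C : Set (List ℕ)) (M : Set (Sym2 (List ℕ))),
      IsKonigCover (treeGraph {[], [0], [1]}) C M →
        C = {([] : List ℕ)} ∧
        (M = {s(([] : List ℕ), [0])} ∨ M = {s(([] : List ℕ), [1])})) ∧
    (∀ (C : Set (List ℕ)) (M : Set (Sym2 (List ℕ))),
      IsKonigCover (treeGraph {[], [0], [1]}) C M → [] ∈ C) := by
  have leaf : ∀ C M, IsKonigCover (treeGraph {[]}) C M ↔ C = ∅ ∧ M = ∅ := fun _ _ ↦ by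
    rw [treeGraph_singleton_nil, isKonigCover_bot_iff]
  have cherry : ∀ C M, IsKonigCover (treeGraph {[], [0], [1]}) C M →
      C = {([] : List ℕ)} ∧ (M = {s(([] : List ℕ), [0])} ∨ M = {s(([] : List ℕ), [1])}) :=
    fun _ _ h ↦ h.eq_center_of_edgeSet_eq_star treeGraph_cherry_edgeSet (by simp)
  refine ⟨leaf, fun C M h ↦ ?_, cherry, fun C M h ↦ ?_⟩
  · simp [((leaf C M).1 h).1]
  · simp [(cherry C M h).1]
end

section
/- Let T be a rooted tree with root r, viewed as a graph, and let (C, M) be a König cover of T. Define T^* = { t ∈ T : for every s with r a proper prefix of s and s a prefix of t, either s ∉ C or the edge {s restricted to length |s|−1, s} ∉ M }. Then for every t ∈ T^*, the restriction of (C, M) to the subtree of T above t is a König cover of that subtree. -/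
/-- `T` is a rooted tree with root `r`: `T = { r ++ σ : σ ∈ T₀ }` for some prefix-closed
`T₀` containing the empty list. -/
def IsRootedTree (r : List ℕ) (T : Set (List ℕ)) : Prop :=
  ∃ T₀ : Set (List ℕ), [] ∈ T₀ ∧ (∀ ⦃σ τ : List ℕ⦄, σ <+: τ → τ ∈ T₀ → σ ∈ T₀) ∧
    T = (fun σ => r ++ σ) '' T₀

/-- `T^*` for a rooted tree `T` with root `r` and a König cover `(C, M)`:
those `t ∈ T` such that every `s` with `r ≺ s ⪯ t` satisfies `s ∉ C` or
`{s.dropLast, s} ∉ M`. -/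
def Tstar (r : List ℕ) (T : Set (List ℕ)) (C : Set (List ℕ))
    (M : Set (Sym2 (List ℕ))) : Set (List ℕ) :=
  {t ∈ T | ∀ s : List ℕ, r <+: s → r ≠ s → s <+: t →
    s ∉ C ∨ s(s.dropLast, s) ∉ M}

/-!
The only tree edge with exactly one endpoint above `t` is `{t.dropLast, t}`, so restricting
`(C, M)` to the subtree can only fail if `t ∈ C` is matched to its parent; the defining
condition of `T^*` at `s = t` excludes this.
-/

namespace IsKonigCover

variable {V : Type*} {G H : SimpleGraph V} {C : Set V} {M : Set (Sym2 V)}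

theorem restrict (h : IsKonigCover G C M) (S : Set V)
    (hH : ∀ a b, H.Adj a b ↔ G.Adj a b ∧ a ∈ S ∧ b ∈ S)
    (hclosed : ∀ e ∈ M, ∀ v ∈ e, v ∈ C → v ∈ S → ∀ w ∈ e, w ∈ S) :
    IsKonigCover H (C ∩ S) {e ∈ M | ∀ v ∈ e, v ∈ S} := by
  obtain ⟨hMG, hpair, hcov, huniq, hsat⟩ := h
  have hedge : ∀ e, e ∈ H.edgeSet ↔ e ∈ G.edgeSet ∧ ∀ v ∈ e, v ∈ S := by
    intro e
    induction e using Sym2.ind with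
    | _ a b => simp [hH, and_comm]
  refine ⟨?_, ?_, ?_, ?_, ?_⟩
  · exact fun e he => (hedge e).2 ⟨hMG he.1, he.2⟩
  · exact fun e he f hf => hpair he.1 hf.1
  · intro e he
    obtain ⟨heG, heS⟩ := (hedge e).1 he
    obtain ⟨v, hve, hvC⟩ := hcov e heG
    exact ⟨v, hve, hvC, heS v hve⟩
  · intro e he
    obtain ⟨v, ⟨hve, hvC⟩, hunique⟩ := huniq e he.1
    exact ⟨v, ⟨hve, hvC, he.2 v hve⟩, fun w hw => hunique w ⟨hw.1, hw.2.1⟩⟩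
  · rintro v ⟨hvC, hvS⟩
    obtain ⟨e, heM, hve⟩ := hsat v hvC
    exact ⟨e, ⟨heM, hclosed e heM v hve hvC hvS⟩, hve⟩

end IsKonigCover

theorem IsRootedTree.prefix_of_mem {r : List ℕ} {T : Set (List ℕ)} (hT : IsRootedTree r T)
    {u : List ℕ} (hu : u ∈ T) : r <+: u := by
  obtain ⟨T₀, -, -, rfl⟩ := hT
  obtain ⟨σ, -, rfl⟩ := hu
  exact List.prefix_append r σ

theorem treeGraph_sep_adj (T : Set (List ℕ)) (p : List ℕ → Prop) (a b : List ℕ) :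
    (treeGraph {u ∈ T | p u}).Adj a b ↔
      (treeGraph T).Adj a b ∧ a ∈ {u ∈ T | p u} ∧ b ∈ {u ∈ T | p u} := by
  simp only [treeGraph, Set.mem_ofPred_eq]
  tauto

theorem exists_eq_concat_of_mem_edgeSet_treeGraph {T : Set (List ℕ)} {e : Sym2 (List ℕ)}
    (he : e ∈ (treeGraph T).edgeSet) :
    ∃ a n, e = s(a, a ++ [n]) ∧ a ∈ T ∧ a ++ [n] ∈ T := by
  induction e using Sym2.ind with
  | _ a b =>
    rw [SimpleGraph.mem_edgeSet] at he
    obtain ⟨ha, hb, ⟨n, rfl⟩ | ⟨n, rfl⟩⟩ := he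
    · exact ⟨a, n, rfl, ha, hb⟩
    · exact ⟨b, n, Sym2.eq_swap, hb, ha⟩

theorem prefix_of_mem_Tstar {r t a : List ℕ} {n : ℕ} {T C : Set (List ℕ)}
    {M : Set (Sym2 (List ℕ))} (hT : IsRootedTree r T) (ht : t ∈ Tstar r T C M) (ha : a ∈ T)
    (heM : s(a, a ++ [n]) ∈ M) {v : List ℕ} (hve : v ∈ s(a, a ++ [n])) (hvC : v ∈ C)
    (htv : t <+: v) : t <+: a := by
  rcases Sym2.mem_iff.mp hve with rfl | rfl
  · exact htv
  obtain rfl | htv := List.prefix_concat_iff.mp htv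
  · have hra := hT.prefix_of_mem ha
    have hrt : r ≠ a ++ [n] := fun hr => by
      simpa [hr] using hra.length_le
    rcases ht.2 _ (hra.trans (List.prefix_append a [n])) hrt List.prefix_rfl with hC | hM
    · exact absurd hvC hC
    · exact absurd heM (by rwa [List.dropLast_concat] at hM)
  · exact htv

/-- For every `t ∈ T^*`, the restriction of `(C, M)` to the subtree of `T` above `t` is a
König cover of that subtree. -/
theorem statement9 (r : List ℕ) (T : Set (List ℕ)) (hT : IsRootedTree r T)
    (C : Set (List ℕ)) (M : Set (Sym2 (List ℕ)))
    (h : IsKonigCover (treeGraph T) C M)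
    (t : List ℕ) (ht : t ∈ Tstar r T C M) :
    IsKonigCover (treeGraph {u ∈ T | t <+: u})
      (C ∩ {u ∈ T | t <+: u})
      {e ∈ M | ∀ v ∈ e, v ∈ {u ∈ T | t <+: u}} := by
  refine h.restrict _ (treeGraph_sep_adj T _) ?_
  intro e heM v hve hvC hvS
  obtain ⟨a, n, rfl, ha, hb⟩ := exists_eq_concat_of_mem_edgeSet_treeGraph (h.1 heM)
  have hta : t <+: a := prefix_of_mem_Tstar hT ht ha heM hve hvC hvS.2
  intro w hwe
  rcases Sym2.mem_iff.mp hwe with rfl | rfl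
  · exact ⟨ha, hta⟩
  · exact ⟨hb, hta.trans (List.prefix_append a [n])⟩
end

section
/- Let X ⊆ ℕ, let ⟨T_i : i ∈ X⟩ be trees (each a prefix-closed subset of List ℕ containing the empty list), and let S be the tree formed by combining them at a root r, i.e., S = {r} ∪ { r ++ [c(i,j)] ++ σ : i ∈ X, j ∈ {0,1}, σ ∈ T_i }, where c is a fixed injection of ℕ × {0,1} into ℕ (e.g., c(i,j) = 2i + j), and write r_{i,j} = r ++ [c(i,j)]. Let (C, M) be a König cover of S (viewed as a graph). Then there exists a function assigning to each i ∈ X an element r_i ∈ { r_{i,0}, r_{i,1} } such that: every r_i belongs to S^*, and r ∉ C if and only if r_i ∈ C for every i ∈ X. -/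
/-- The tree obtained by combining the trees `⟨T i : i ∈ X⟩` at a root `r`: two copies
of each `T i` are adjoined to `r`, using the injection `c(i, j) = 2 * i + j` of
`ℕ × {0, 1}` into `ℕ`. -/
def combineAt (r : List ℕ) (X : Set ℕ) (T : ℕ → Set (List ℕ)) : Set (List ℕ) :=
  {r} ∪ {l | ∃ i ∈ X, ∃ j : Fin 2, ∃ σ ∈ T i, l = r ++ [2 * i + j] ++ σ}

/-! If `r ∈ C`, then `r` is matched to a child `t`, and `t ∉ C` because an edge of `M` has
exactly one endpoint in `C`; pick `t` in its pair, and elsewhere a child whose edge to `r` is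
unmatched. If `r ∉ C`, every child of `r` lies in `C` because `C` is a cover, and in each pair
at most one child is matched to `r`; pick the other one. In both cases `g i` is a child of `r`,
so the only `s` with `r ≺ s ⪯ g i` is `g i` itself. -/

namespace IsKonigCover

variable {V : Type*} {G : SimpleGraph V} {C : Set V} {M : Set (Sym2 V)} {v w w' : V}

theorem eq_of_edge_mem (hK : IsKonigCover G C M) (h : s(v, w) ∈ M) (h' : s(v, w') ∈ M) :
    w = w' := by
  by_contra hne
  exact hK.2.1 h h' (fun he => hne (Sym2.congr_right.mp he)) v
    (Sym2.mem_mk_left _ _) (Sym2.mem_mk_left _ _)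

theorem exists_edge_mem_of_mem (hK : IsKonigCover G C M) (hv : v ∈ C) :
    ∃ w, G.Adj v w ∧ s(v, w) ∈ M := by
  obtain ⟨e, he, hve⟩ := hK.2.2.2.2 v hv
  obtain ⟨w, rfl⟩ := Sym2.mem_iff_exists.mp hve
  exact ⟨w, hK.1 he, he⟩

theorem notMem_of_edge_mem (hK : IsKonigCover G C M) (hv : v ∈ C) (h : s(v, w) ∈ M) :
    w ∉ C := fun hw => by
  obtain ⟨u, -, hu⟩ := hK.2.2.2.1 _ h
  exact G.ne_of_adj (hK.1 h)
    ((hu v ⟨Sym2.mem_mk_left _ _, hv⟩).trans (hu w ⟨Sym2.mem_mk_right _ _, hw⟩).symm)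

theorem mem_of_adj_of_notMem (hK : IsKonigCover G C M) (hv : v ∉ C) (h : G.Adj v w) :
    w ∈ C := by
  obtain ⟨u, hu, huC⟩ := hK.2.2.1 s(v, w) h
  rcases Sym2.mem_iff.mp hu with rfl | rfl
  · exact absurd huC hv
  · exact huC

end IsKonigCover

theorem append_singleton_mem_Tstar {r : List ℕ} {T C : Set (List ℕ)} {M : Set (Sym2 (List ℕ))}
    {m : ℕ} (hm : r ++ [m] ∈ T) (h : r ++ [m] ∉ C ∨ s(r, r ++ [m]) ∉ M) :
    r ++ [m] ∈ Tstar r T C M := by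
  refine ⟨hm, fun s hrs hne hs => ?_⟩
  obtain rfl : s = r ++ [m] := by
    refine (List.prefix_concat_iff.mp hs).resolve_right fun hsr => hne ?_
    exact hrs.eq_of_length (le_antisymm hrs.length_le hsr.length_le)
  simpa using h

section combineAt

variable {r : List ℕ} {X : Set ℕ} {T : ℕ → Set (List ℕ)} {C : Set (List ℕ)}
  {M : Set (Sym2 (List ℕ))} {i : ℕ} {c : List ℕ}

theorem prefix_of_mem_combineAt {l : List ℕ} (hl : l ∈ combineAt r X T) : r <+: l := by
  rcases hl with rfl | ⟨i, -, j, σ, -, rfl⟩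
  · exact List.prefix_refl _
  · exact (List.prefix_append r _).trans (List.prefix_append _ σ)

theorem mem_combineAt_of_child (hi : i ∈ X) (hTi : [] ∈ T i)
    (hc : c = r ++ [2 * i] ∨ c = r ++ [2 * i + 1]) : c ∈ combineAt r X T := by
  rcases hc with rfl | rfl
  · exact Or.inr ⟨i, hi, 0, [], hTi, by simp⟩
  · exact Or.inr ⟨i, hi, 1, [], hTi, by simp⟩

theorem exists_child_of_adj_root {t : List ℕ} (h : (treeGraph (combineAt r X T)).Adj r t) :
    ∃ i ∈ X, t = r ++ [2 * i] ∨ t = r ++ [2 * i + 1] := by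
  obtain ⟨-, ht, ⟨n, rfl⟩ | ⟨n, hr⟩⟩ := h
  · rcases ht with ht | ⟨i, hi, j, σ, -, ht⟩
    · simp at ht
    · refine ⟨i, hi, ?_⟩
      simp only [List.append_assoc, List.singleton_append, List.append_cancel_left_eq,
        List.cons.injEq] at ht
      fin_cases j <;> simp [ht.1]
  · have hlen := congrArg List.length hr
    simp only [List.length_append, List.length_singleton] at hlen
    have := (prefix_of_mem_combineAt ht).length_le
    omega

theorem child_mem_Tstar (hi : i ∈ X) (hTi : [] ∈ T i)
    (hc : c = r ++ [2 * i] ∨ c = r ++ [2 * i + 1]) (h : c ∉ C ∨ s(r, c) ∉ M) :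
    c ∈ Tstar r (combineAt r X T) C M := by
  have hcS := mem_combineAt_of_child hi hTi hc
  rcases hc with rfl | rfl <;> exact append_singleton_mem_Tstar hcS h

theorem adj_root_of_child (hi : i ∈ X) (hTi : [] ∈ T i)
    (hc : c = r ++ [2 * i] ∨ c = r ++ [2 * i + 1]) : (treeGraph (combineAt r X T)).Adj r c :=
  ⟨Set.mem_union_left _ rfl, mem_combineAt_of_child hi hTi hc,
    by rcases hc with rfl | rfl <;> simp⟩

theorem exists_roots_of_mem (hT : ∀ i ∈ X, [] ∈ T i)
    (hK : IsKonigCover (treeGraph (combineAt r X T)) C M) (hr : r ∈ C) :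
    ∃ g : ℕ → List ℕ, (∀ i ∈ X, (g i = r ++ [2 * i] ∨ g i = r ++ [2 * i + 1]) ∧
      g i ∈ Tstar r (combineAt r X T) C M) ∧ ∃ i ∈ X, g i ∉ C := by
  obtain ⟨t, hadj, htM⟩ := hK.exists_edge_mem_of_mem hr
  obtain ⟨i₀, hi₀, ht⟩ := exists_child_of_adj_root hadj
  have htC : t ∉ C := hK.notMem_of_edge_mem hr htM
  refine ⟨fun i => if i = i₀ then t else r ++ [2 * i], fun i hi => ?_, i₀, hi₀, by simpa⟩
  dsimp only
  split_ifs with hii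
  · subst hii
    exact ⟨ht, child_mem_Tstar hi (hT i hi) ht (Or.inl htC)⟩
  · refine ⟨Or.inl rfl, child_mem_Tstar hi (hT i hi) (Or.inl rfl) (Or.inr fun h => hii ?_)⟩
    have := hK.eq_of_edge_mem h htM
    rcases ht with rfl | rfl <;>
      simp only [List.append_cancel_left_eq, List.cons.injEq, and_true] at this <;> omega

theorem exists_roots_of_notMem (hT : ∀ i ∈ X, [] ∈ T i)
    (hK : IsKonigCover (treeGraph (combineAt r X T)) C M) (hr : r ∉ C) :
    ∃ g : ℕ → List ℕ, (∀ i ∈ X, (g i = r ++ [2 * i] ∨ g i = r ++ [2 * i + 1]) ∧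
      g i ∈ Tstar r (combineAt r X T) C M) ∧ ∀ i ∈ X, g i ∈ C := by
  have hfree : ∀ i, ∃ c, (c = r ++ [2 * i] ∨ c = r ++ [2 * i + 1]) ∧ s(r, c) ∉ M := by
    intro i
    by_cases h₀ : s(r, r ++ [2 * i]) ∈ M
    · exact ⟨_, Or.inr rfl, fun h₁ => by simpa using hK.eq_of_edge_mem h₀ h₁⟩
    · exact ⟨_, Or.inl rfl, h₀⟩
  choose g hg hgM using hfree
  exact ⟨g, fun i hi => ⟨hg i, child_mem_Tstar hi (hT i hi) (hg i) (Or.inr (hgM i))⟩,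
    fun i hi => hK.mem_of_adj_of_notMem hr (adj_root_of_child hi (hT i hi) (hg i))⟩

end combineAt

/-- If `(C, M)` is a König cover of the combination `S` of trees `⟨T i : i ∈ X⟩` at the
root `r`, then one can choose for each `i ∈ X` one of the two roots
`r_{i,0} = r ++ [2i]`, `r_{i,1} = r ++ [2i+1]` — call it `g i` — so that each `g i` lies
in `S^*`, and `r ∉ C` iff `g i ∈ C` for every `i ∈ X`. -/
theorem statement11 (r : List ℕ) (X : Set ℕ) (T : ℕ → Set (List ℕ))
    (hT : ∀ i ∈ X, [] ∈ T i ∧ ∀ ⦃σ τ : List ℕ⦄, σ <+: τ → τ ∈ T i → σ ∈ T i)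
    (C : Set (List ℕ)) (M : Set (Sym2 (List ℕ)))
    (h : IsKonigCover (treeGraph (combineAt r X T)) C M) :
    ∃ g : ℕ → List ℕ,
      (∀ i ∈ X, (g i = r ++ [2 * i] ∨ g i = r ++ [2 * i + 1]) ∧
        g i ∈ Tstar r (combineAt r X T) C M) ∧
      (r ∉ C ↔ ∀ i ∈ X, g i ∈ C) := by
  have hroot : ∀ i ∈ X, [] ∈ T i := fun i hi => (hT i hi).1
  by_cases hr : r ∈ C
  · obtain ⟨g, hg, i, hi, hgi⟩ := exists_roots_of_mem hroot h hr
    exact ⟨g, hg, iff_of_false (not_not.mpr hr) fun hall => hgi (hall i hi)⟩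
  · obtain ⟨g, hg, hgC⟩ := exists_roots_of_notMem hroot h hr
    exact ⟨g, hg, iff_of_true hr hgC⟩
end

section
/- Let S be a rooted tree viewed as a graph, let (C, M) be a König cover of S, and let r ∈ S^*. Suppose the subtree of S above r is the combination at root r of a family of trees ⟨T_i : i ∈ X⟩ (X ⊆ ℕ), i.e., it equals {r} ∪ { r ++ [c(i,j)] ++ σ : i ∈ X, j ∈ {0,1}, σ ∈ T_i }, where c is a fixed injection of ℕ × {0,1} into ℕ and r_{i,j} = r ++ [c(i,j)]. Then there exists a function assigning to each i ∈ X an element r_i ∈ { r_{i,0}, r_{i,1} } such that: every r_i belongs to S^*, and r ∉ C if and only if r_i ∈ C for every i ∈ X. -/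
/-!
A child of `r` lies in `S^*` as soon as it is uncovered or its edge to `r` is unmatched.
If `r ∈ C`, its matching edge cannot go up to its parent (that is what `r ∈ S^*` excludes),
so it goes down to a child, which is then uncovered: take that child in its pair, and in
every other pair a child whose edge to `r` is therefore unmatched. If `r ∉ C`, every child
is covered, and since at most one edge at `r` is matched, each pair has a child whose edge
to `r` is unmatched.
-/

namespace IsKonigCover

variable {V : Type*} {G : SimpleGraph V} {C : Set V} {M : Set (Sym2 V)}

theorem eq_of_mem_of_mem_left (h : IsKonigCover G C M) {u v w : V}
    (hv : s(u, v) ∈ M) (hw : s(u, w) ∈ M) : v = w := by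
  by_contra hvw
  exact h.2.1 hv hw (mt Sym2.congr_right.mp hvw) u (Sym2.mem_mk_left _ _) (Sym2.mem_mk_left _ _)

theorem right_not_mem (h : IsKonigCover G C M) {u v : V} (he : s(u, v) ∈ M) (hu : u ∈ C) :
    v ∉ C := by
  intro hv
  obtain ⟨w, -, hw⟩ := h.2.2.2.1 _ he
  have huv : u = v :=
    (hw u ⟨Sym2.mem_mk_left _ _, hu⟩).trans (hw v ⟨Sym2.mem_mk_right _ _, hv⟩).symm
  exact ((G.mem_edgeSet).mp (h.1 he)).ne huv

theorem mem_of_adj_of_not_mem (h : IsKonigCover G C M) {u v : V} (hadj : G.Adj u v)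
    (hu : u ∉ C) : v ∈ C := by
  obtain ⟨w, hw, hwC⟩ := h.2.2.1 _ ((G.mem_edgeSet).mpr hadj)
  rcases Sym2.mem_iff.mp hw with rfl | rfl
  · exact absurd hwC hu
  · exact hwC

theorem exists_mem_of_mem (h : IsKonigCover G C M) {v : V} (hv : v ∈ C) :
    ∃ w, s(v, w) ∈ M := by
  obtain ⟨e, he, hve⟩ := h.2.2.2.2 v hv
  obtain ⟨w, rfl⟩ := Sym2.mem_iff_exists.mp hve
  exact ⟨w, he⟩

end IsKonigCover

theorem IsRootedTree.prefix_of_mem_s12 {r₀ : List ℕ} {S : Set (List ℕ)} (hS : IsRootedTree r₀ S)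
    {t : List ℕ} (ht : t ∈ S) : r₀ <+: t := by
  obtain ⟨T₀, -, -, rfl⟩ := hS
  obtain ⟨σ, -, rfl⟩ := ht
  exact List.prefix_append _ _

section Tstar

variable {r₀ : List ℕ} {S C : Set (List ℕ)} {M : Set (Sym2 (List ℕ))} {r : List ℕ}

theorem append_singleton_mem_Tstar_s12 (hr : r ∈ Tstar r₀ S C M) {n : ℕ} (hn : r ++ [n] ∈ S)
    (hC : r ++ [n] ∉ C ∨ s(r, r ++ [n]) ∉ M) : r ++ [n] ∈ Tstar r₀ S C M := by
  refine ⟨hn, fun s hs hne hsn => ?_⟩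
  rcases List.prefix_concat_iff.mp hsn with rfl | hsr
  · rwa [List.dropLast_concat]
  · exact hr.2 s hs hne hsr

theorem exists_child_matched_of_mem_Tstar (hS : IsRootedTree r₀ S)
    (h : IsKonigCover (treeGraph S) C M) (hr : r ∈ Tstar r₀ S C M) (hrC : r ∈ C) :
    ∃ n, r ++ [n] ∈ S ∧ s(r, r ++ [n]) ∈ M := by
  obtain ⟨t, ht⟩ := h.exists_mem_of_mem hrC
  obtain ⟨-, htS, ⟨n, rfl⟩ | ⟨n, rfl⟩⟩ := ((treeGraph S).mem_edgeSet).mp (h.1 ht)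
  · exact ⟨n, htS, ht⟩
  · have hne : r₀ ≠ t ++ [n] := by
      intro heq
      have := (hS.prefix_of_mem_s12 htS).length_le
      simp [heq] at this
    rcases hr.2 _ (hS.prefix_of_mem_s12 hr.1) hne List.prefix_rfl with hC | hM
    · exact absurd hrC hC
    · rw [List.dropLast_concat, Sym2.eq_swap] at hM
      exact absurd ht hM

end Tstar

section combineAt

variable {S : Set (List ℕ)} {r : List ℕ} {X : Set ℕ} {T : ℕ → Set (List ℕ)}

theorem append_mem_of_combineAt (hsub : {u ∈ S | r <+: u} = combineAt r X T) {i : ℕ}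
    (hi : i ∈ X) (hTi : [] ∈ T i) {j : ℕ} (hj : j < 2) : r ++ [2 * i + j] ∈ S := by
  have : r ++ [2 * i + j] ∈ combineAt r X T :=
    Or.inr ⟨i, hi, ⟨j, hj⟩, [], hTi, by simp⟩
  rw [← hsub] at this
  exact this.1

theorem div_two_mem_of_combineAt (hsub : {u ∈ S | r <+: u} = combineAt r X T) {n : ℕ}
    (hn : r ++ [n] ∈ S) : n / 2 ∈ X := by
  have : r ++ [n] ∈ combineAt r X T := hsub ▸ ⟨hn, List.prefix_append _ _⟩
  rcases this with heq | ⟨i, hi, j, σ, -, heq⟩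
  · simpa using congrArg List.length heq
  · obtain ⟨rfl, -⟩ : n = 2 * i + j ∧ [] = σ := by simpa using heq
    have := j.2
    rwa [show (2 * i + j) / 2 = i by omega]

end combineAt

section choice

variable {r₀ : List ℕ} {S C : Set (List ℕ)} {M : Set (Sym2 (List ℕ))} {r : List ℕ}
  {X : Set ℕ} {T : ℕ → Set (List ℕ)}

theorem exists_children_mem_Tstar_of_mem (hS : IsRootedTree r₀ S)
    (h : IsKonigCover (treeGraph S) C M) (hr : r ∈ Tstar r₀ S C M)
    (hT : ∀ i ∈ X, [] ∈ T i) (hsub : {u ∈ S | r <+: u} = combineAt r X T) (hrC : r ∈ C) :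
    ∃ g : ℕ → List ℕ,
      (∀ i ∈ X, (g i = r ++ [2 * i] ∨ g i = r ++ [2 * i + 1]) ∧ g i ∈ Tstar r₀ S C M) ∧
      ∃ i ∈ X, g i ∉ C := by
  obtain ⟨n, hnS, hnM⟩ := exists_child_matched_of_mem_Tstar hS h hr hrC
  have hnC : r ++ [n] ∉ C := h.right_not_mem hnM hrC
  refine ⟨fun i => if i = n / 2 then r ++ [n] else r ++ [2 * i], fun i hi => ?_,
    n / 2, div_two_mem_of_combineAt hsub hnS, by simpa using hnC⟩
  by_cases hin : i = n / 2
  · simp only [if_pos hin, List.append_cancel_left_eq, List.cons.injEq, and_true]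
    exact ⟨by omega, append_singleton_mem_Tstar_s12 hr hnS (Or.inl hnC)⟩
  · simp only [if_neg hin, true_or, true_and]
    have hiM : s(r, r ++ [2 * i]) ∉ M := fun hiM => by
      have := h.eq_of_mem_of_mem_left hiM hnM
      simp only [List.append_cancel_left_eq, List.cons.injEq, and_true] at this
      omega
    exact append_singleton_mem_Tstar_s12 hr
      (by simpa using append_mem_of_combineAt hsub hi (hT i hi) two_pos) (Or.inr hiM)

theorem exists_children_mem_Tstar_of_not_mem (h : IsKonigCover (treeGraph S) C M)
    (hr : r ∈ Tstar r₀ S C M) (hT : ∀ i ∈ X, [] ∈ T i)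
    (hsub : {u ∈ S | r <+: u} = combineAt r X T) (hrC : r ∉ C) :
    ∃ g : ℕ → List ℕ,
      (∀ i ∈ X, (g i = r ++ [2 * i] ∨ g i = r ++ [2 * i + 1]) ∧ g i ∈ Tstar r₀ S C M) ∧
      ∀ i ∈ X, g i ∈ C := by
  have hchild (i : ℕ) (hi : i ∈ X) (n : ℕ) (hn : n = 2 * i ∨ n = 2 * i + 1)
      (hnM : s(r, r ++ [n]) ∉ M) : r ++ [n] ∈ Tstar r₀ S C M ∧ r ++ [n] ∈ C := by
    have hnS : r ++ [n] ∈ S := by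
      rcases hn with rfl | rfl
      · simpa using append_mem_of_combineAt hsub hi (hT i hi) two_pos
      · exact append_mem_of_combineAt hsub hi (hT i hi) one_lt_two
    exact ⟨append_singleton_mem_Tstar_s12 hr hnS (Or.inr hnM),
      h.mem_of_adj_of_not_mem ⟨hr.1, hnS, Or.inl ⟨n, rfl⟩⟩ hrC⟩
  have hfree (i : ℕ) : ∃ n, (n = 2 * i ∨ n = 2 * i + 1) ∧ s(r, r ++ [n]) ∉ M := by
    by_cases hiM : s(r, r ++ [2 * i]) ∈ M
    · refine ⟨2 * i + 1, Or.inr rfl, fun hM => ?_⟩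
      simpa using h.eq_of_mem_of_mem_left hiM hM
    · exact ⟨2 * i, Or.inl rfl, hiM⟩
  choose n hn hnM using hfree
  refine ⟨fun i => r ++ [n i], fun i hi => ⟨?_, (hchild i hi _ (hn i) (hnM i)).1⟩,
    fun i hi => (hchild i hi _ (hn i) (hnM i)).2⟩
  rcases hn i with h2i | h2i <;> simp [h2i]

end choice

/-- Let `(C, M)` be a König cover of a rooted tree `S` with root `r₀`, and let
`r ∈ S^*` be such that the subtree of `S` above `r` is the combination at root `r` of
the trees `⟨T i : i ∈ X⟩`. Then one can choose for each `i ∈ X` one of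
`r ++ [2i]`, `r ++ [2i+1]` — call it `g i` — so that each `g i` lies in `S^*`, and
`r ∉ C` iff `g i ∈ C` for every `i ∈ X`. -/
theorem statement12 (r₀ : List ℕ) (S : Set (List ℕ)) (hS : IsRootedTree r₀ S)
    (C : Set (List ℕ)) (M : Set (Sym2 (List ℕ)))
    (h : IsKonigCover (treeGraph S) C M)
    (r : List ℕ) (hr : r ∈ Tstar r₀ S C M)
    (X : Set ℕ) (T : ℕ → Set (List ℕ))
    (hT : ∀ i ∈ X, [] ∈ T i ∧ ∀ ⦃σ τ : List ℕ⦄, σ <+: τ → τ ∈ T i → σ ∈ T i)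
    (hsub : {u ∈ S | r <+: u} = combineAt r X T) :
    ∃ g : ℕ → List ℕ,
      (∀ i ∈ X, (g i = r ++ [2 * i] ∨ g i = r ++ [2 * i + 1]) ∧
        g i ∈ Tstar r₀ S C M) ∧
      (r ∉ C ↔ ∀ i ∈ X, g i ∈ C) := by
  have hT₀ : ∀ i ∈ X, [] ∈ T i := fun i hi => (hT i hi).1
  by_cases hrC : r ∈ C
  · obtain ⟨g, hg, i₀, hi₀, hgi₀⟩ := exists_children_mem_Tstar_of_mem hS h hr hT₀ hsub hrC
    exact ⟨g, hg, iff_of_false (not_not.mpr hrC) fun hall => hgi₀ (hall i₀ hi₀)⟩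
  · obtain ⟨g, hg, hgC⟩ := exists_children_mem_Tstar_of_not_mem h hr hT₀ hsub hrC
    exact ⟨g, hg, iff_of_true hrC hgC⟩
end
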